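/- Let G be an unmixed chordal graph on the vertex set [n] and let F_1,...,F_m be the facets of the clique complex Δ(G) which admit a free vertex. Then F_i ∩ F_j = ∅ whenever i ≠ j. -/

import Mathlib

set_option maxHeartbeats 1000000
set_option synthInstance.maxHeartbeats 400000

open MvPolynomial

/-- A simple graph is chordal if every cycle of length > 3 has a chord, i.e. an edge of the
graph joining two vertices of the cycle which is not an edge of the cycle. -/
def SimpleGraph.IsChordal {V : Type*} (G : SimpleGraph V) : Prop :=
  ∀ (v : V) (c : G.Walk v v), c.IsCycle → 3 < c.length →
    ∃ u w, u ∈ c.support ∧ w ∈ c.support ∧ G.Adj u w ∧ s(u, w) ∉ c.edges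

/-- `F` is a facet of the clique complex `Δ(G)`, i.e. a maximal clique of `G`. -/
def SimpleGraph.IsFacet {V : Type*} (G : SimpleGraph V) (F : Finset V) : Prop :=
  G.IsClique (F : Set V) ∧ ∀ F' : Finset V, G.IsClique (F' : Set V) → F ⊆ F' → F' = F

/-- `v` is a free vertex of the facet `F` of `Δ(G)`: it belongs to no other facet. -/
def SimpleGraph.IsFreeVertex {V : Type*} (G : SimpleGraph V) (F : Finset V) (v : V) : Prop :=
  v ∈ F ∧ ∀ F' : Finset V, G.IsFacet F' → v ∈ F' → F' = F

/-- `F` is a facet of `Δ(G)` admitting a free vertex. -/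
def SimpleGraph.IsFreeFacet {V : Type*} (G : SimpleGraph V) (F : Finset V) : Prop :=
  G.IsFacet F ∧ ∃ v, G.IsFreeVertex F v

/-- A vertex cover of `G`: a set of vertices meeting every edge. -/
def SimpleGraph.IsFinsetVertexCover {V : Type*} (G : SimpleGraph V) (C : Finset V) : Prop :=
  ∀ u w, G.Adj u w → u ∈ C ∨ w ∈ C

/-- A minimal vertex cover of `G`: no proper subset is a vertex cover. -/
def SimpleGraph.IsMinVertexCover {V : Type*} (G : SimpleGraph V) (C : Finset V) : Prop :=
  G.IsFinsetVertexCover C ∧ ∀ C' ⊆ C, G.IsFinsetVertexCover C' → C' = C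

/-- `G` is unmixed: all minimal vertex covers of `G` have the same cardinality. -/
def SimpleGraph.Unmixed {V : Type*} (G : SimpleGraph V) : Prop :=
  ∀ C C' : Finset V, G.IsMinVertexCover C → G.IsMinVertexCover C' → C.card = C'.card

/-!
Suppose the free facets `F` and `F'`, with free vertices `z` and `z'`, share a vertex `v`.
Take a minimal vertex cover `C` avoiding `v`; it contains every other vertex of the cliques `F`
and `F'`. All neighbours of the free vertices `z`, `z'` lie in `F ∪ F' ⊆ insert v C`, so
`insert v C \ {z, z'}` is still a vertex cover, and it is smaller than `C`. In an unmixed graph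
no vertex cover is smaller than a minimal one.
-/

theorem Finset.card_insert_sdiff_pair_lt {α : Type*} [DecidableEq α] {s : Finset α}
    {v a b : α} (hab : a ≠ b) (ha : a ∈ insert v s) (hb : b ∈ insert v s) :
    (insert v s \ {a, b}).card < s.card := by
  have hsub : {a, b} ⊆ insert v s := Finset.insert_subset ha (Finset.singleton_subset_iff.2 hb)
  have h2 := Finset.card_le_card hsub
  rw [Finset.card_pair hab] at h2
  rw [Finset.card_sdiff_of_subset hsub, Finset.card_pair hab]
  have := Finset.card_insert_le v s
  omega

namespace SimpleGraph

variable {V : Type*} {G : SimpleGraph V}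

theorem IsClique.exists_isFacet_superset [Fintype V] {S : Finset V} (hS : G.IsClique (S : Set V)) :
    ∃ F, G.IsFacet F ∧ S ⊆ F := by
  classical
  obtain ⟨T, hT, hmax⟩ := Finset.exists_max_image
    (Finset.univ.filter fun T => S ⊆ T ∧ G.IsClique (T : Set V)) Finset.card ⟨S, by simp [hS]⟩
  simp only [Finset.mem_filter, Finset.mem_univ, true_and] at hT hmax
  refine ⟨T, ⟨hT.2, fun F' hF' hTF' => ?_⟩, hT.1⟩
  exact (Finset.eq_of_subset_of_card_le hTF' (hmax F' ⟨hT.1.trans hTF', hF'⟩)).symm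

theorem IsFreeVertex.mem_of_adj [Fintype V] {F : Finset V} {z w : V} (hz : G.IsFreeVertex F z)
    (hzw : G.Adj z w) : w ∈ F := by
  classical
  have hedge : G.IsClique (({z, w} : Finset V) : Set V) := by
    rw [Finset.coe_pair]
    exact isClique_pair.mpr fun _ => hzw
  obtain ⟨T, hT, hzwT⟩ := hedge.exists_isFacet_superset
  rw [← hz.2 T hT (hzwT (by simp))]
  exact hzwT (by simp)

theorem IsFreeVertex.mem_sdiff_pair_of_adj [Fintype V] [DecidableEq V] {F : Finset V}
    {z z' w : V} (hz : G.IsFreeVertex F z) (hz' : z' ∉ F) (hzw : G.Adj z w) : w ∈ F \ {z, z'} := by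
  have hwF := hz.mem_of_adj hzw
  refine Finset.mem_sdiff.2 ⟨hwF, ?_⟩
  rw [Finset.mem_insert, Finset.mem_singleton]
  rintro (rfl | rfl)
  exacts [hzw.ne rfl, hz' hwF]

theorem IsFinsetVertexCover.mono {C C' : Finset V} (hC : G.IsFinsetVertexCover C) (h : C ⊆ C') :
    G.IsFinsetVertexCover C' :=
  fun u w huw => (hC u w huw).imp (@h u) (@h w)

theorem IsFinsetVertexCover.sdiff [DecidableEq V] {C Z : Finset V}
    (hC : G.IsFinsetVertexCover C) (hZ : ∀ z ∈ Z, ∀ w, G.Adj z w → w ∈ C \ Z) :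
    G.IsFinsetVertexCover (C \ Z) := by
  intro u w huw
  by_cases hu : u ∈ Z
  · exact Or.inr (hZ u hu w huw)
  by_cases hw : w ∈ Z
  · exact Or.inl (hZ w hw u huw.symm)
  exact (hC u w huw).imp (fun h => Finset.mem_sdiff.2 ⟨h, hu⟩) (fun h => Finset.mem_sdiff.2 ⟨h, hw⟩)

theorem IsFinsetVertexCover.subset_insert_of_isClique [DecidableEq V] {C F : Finset V} {v : V}
    (hC : G.IsFinsetVertexCover C) (hF : G.IsClique (F : Set V)) (hvF : v ∈ F) (hvC : v ∉ C) :
    F ⊆ insert v C := by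
  intro u hu
  rw [Finset.mem_insert]
  by_cases huv : u = v
  · exact Or.inl huv
  · exact Or.inr ((hC u v (hF hu hvF huv)).resolve_right hvC)

theorem IsFinsetVertexCover.exists_isMinVertexCover_subset {C : Finset V}
    (hC : G.IsFinsetVertexCover C) : ∃ D ⊆ C, G.IsMinVertexCover D := by
  classical
  obtain ⟨D, hD, hmin⟩ := Finset.exists_min_image
    (C.powerset.filter G.IsFinsetVertexCover) Finset.card ⟨C, by simp [hC]⟩
  simp only [Finset.mem_filter, Finset.mem_powerset] at hD hmin
  refine ⟨D, hD.1, hD.2, fun D' hD'D hD' => ?_⟩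
  exact Finset.eq_of_subset_of_card_le hD'D (hmin D' ⟨hD'D.trans hD.1, hD'⟩)

theorem exists_isMinVertexCover_notMem [Fintype V] [DecidableEq V] (v : V) :
    ∃ C, G.IsMinVertexCover C ∧ v ∉ C := by
  have hcov : G.IsFinsetVertexCover (Finset.univ.erase v) := by
    intro u w huw
    by_cases hu : u = v
    · exact Or.inr (Finset.mem_erase.2 ⟨hu ▸ huw.ne', Finset.mem_univ w⟩)
    · exact Or.inl (Finset.mem_erase.2 ⟨hu, Finset.mem_univ u⟩)
  obtain ⟨C, hCv, hC⟩ := hcov.exists_isMinVertexCover_subset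
  exact ⟨C, hC, fun hv => Finset.notMem_erase v _ (hCv hv)⟩

theorem Unmixed.card_le {D C : Finset V} (h : G.Unmixed) (hD : G.IsMinVertexCover D)
    (hC : G.IsFinsetVertexCover C) : D.card ≤ C.card := by
  obtain ⟨D', hD'C, hD'⟩ := hC.exists_isMinVertexCover_subset
  exact h D D' hD hD' ▸ Finset.card_le_card hD'C

end SimpleGraph

theorem freeFacets_pairwise_disjoint_general {n : ℕ} (G : SimpleGraph (Fin n))
    (hunmixed : G.Unmixed)
    (F F' : Finset (Fin n)) (hF : G.IsFreeFacet F) (hF' : G.IsFreeFacet F')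
    (hne : F ≠ F') :
    Disjoint F F' := by
  rw [Finset.disjoint_left]
  intro v hvF hvF'
  obtain ⟨hFfacet, z, hz⟩ := hF
  obtain ⟨hF'facet, z', hz'⟩ := hF'
  have hzF' : z ∉ F' := fun h => hne (hz.2 F' hF'facet h).symm
  have hz'F : z' ∉ F := fun h => hne (hz'.2 F hFfacet h)
  obtain ⟨C, hC, hvC⟩ := SimpleGraph.exists_isMinVertexCover_notMem (G := G) v
  have hFC := hC.1.subset_insert_of_isClique hFfacet.1 hvF hvC
  have hF'C := hC.1.subset_insert_of_isClique hF'facet.1 hvF' hvC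
  have hsmaller : G.IsFinsetVertexCover (insert v C \ {z, z'}) := by
    refine (hC.1.mono (Finset.subset_insert v C)).sdiff ?_
    simp only [Finset.mem_insert, Finset.mem_singleton, forall_eq_or_imp, forall_eq]
    refine ⟨fun w hw => ?_, fun w hw => ?_⟩
    · exact Finset.sdiff_subset_sdiff hFC le_rfl (hz.mem_sdiff_pair_of_adj hz'F hw)
    · rw [Finset.pair_comm]
      exact Finset.sdiff_subset_sdiff hF'C le_rfl (hz'.mem_sdiff_pair_of_adj hzF' hw)
  have hzz' : z ≠ z' := fun h => hz'F (h ▸ hz.1)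
  exact (hunmixed.card_le hC hsmaller).not_gt
    (Finset.card_insert_sdiff_pair_lt hzz' (hFC hz.1) (hF'C hz'.1))

/-- If `G` is an unmixed chordal graph on `[n]`, then the facets of
`Δ(G)` admitting a free vertex are pairwise disjoint. -/
theorem freeFacets_pairwise_disjoint {n : ℕ} (G : SimpleGraph (Fin n))
    (hchordal : G.IsChordal) (hiso : ∀ v : Fin n, ∃ w, G.Adj v w)
    (hunmixed : G.Unmixed)
    (F F' : Finset (Fin n)) (hF : G.IsFreeFacet F) (hF' : G.IsFreeFacet F')
    (hne : F ≠ F') :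
    Disjoint F F' :=
  freeFacets_pairwise_disjoint_general G hunmixed F F' hF hF' hne
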